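/- Fix distinct positive real numbers x and y. Then the function p ↦ J_p(x,y) is strictly increasing on ℝ ∖ {0, −1}; that is, for all p, q ∈ ℝ ∖ {0, −1} with p < q, J_p(x,y) < J_q(x,y). -/

import Mathlib

/-!
For `0 < a < b`, `J_p(b, a) = ∫_a^b t^p dt / ∫_a^b t^(p-1) dt` is the mean of `t` against the
weight `t^(p-1)`. Comparing two such ratios, `J_p < J_q` becomes
`∫ t^p · ∫ t^(q-1) < ∫ t^(p-1) · ∫ t^q`, which is Chebyshev's integral inequality for the two
increasing functions `t` and `t^(q-p)` against the weight `t^(p-1)`.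
-/

/-- The Alzer mean `J_p(a,b) = (p/(p+1)) * (a^(p+1) - b^(p+1))/(a^p - b^p)`
of distinct positive reals `a`, `b`, for `p ∉ {0, -1}`. -/
noncomputable def alzer (p a b : ℝ) : ℝ :=
  (p / (p + 1)) * ((a ^ (p + 1) - b ^ (p + 1)) / (a ^ p - b ^ p))

open intervalIntegral Set

/-- Strict Chebyshev integral inequality. Twice the difference of the two sides is the double
integral of `w s * w t * ((f s - f t) * (g s - g t)) ≥ 0`; the inner integral is computed in
closed form, so no Fubini is needed. -/
theorem integral_mul_integral_lt_integral_mul_integral_of_strictMonoOn {f g w : ℝ → ℝ} {a b : ℝ}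
    (hab : a < b) (hf : ContinuousOn f (Icc a b)) (hg : ContinuousOn g (Icc a b))
    (hw : ContinuousOn w (Icc a b)) (hf_mono : StrictMonoOn f (Icc a b))
    (hg_mono : StrictMonoOn g (Icc a b)) (hw_pos : ∀ x ∈ Icc a b, 0 < w x) :
    (∫ x in a..b, f x * w x) * (∫ x in a..b, g x * w x) <
      (∫ x in a..b, w x) * ∫ x in a..b, f x * g x * w x := by
  have hint : ∀ {φ : ℝ → ℝ}, ContinuousOn φ (Icc a b) →
      IntervalIntegrable φ MeasureTheory.volume a b :=
    fun h => h.intervalIntegrable_of_Icc hab.le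
  set A := ∫ x in a..b, w x
  set B := ∫ x in a..b, f x * g x * w x
  set C := ∫ x in a..b, f x * w x
  set D := ∫ x in a..b, g x * w x
  have slice (s : ℝ) : ∫ t in a..b, w s * w t * ((f s - f t) * (g s - g t)) =
      w s * (f s * g s * A - f s * D - g s * C + B) := by
    have expand : ∀ t, w s * w t * ((f s - f t) * (g s - g t)) =
        w s * (f s * g s * w t - f s * (g t * w t) - g s * (f t * w t) + f t * g t * w t) :=
      fun t => by ring
    simp_rw [expand]
    rw [integral_const_mul, integral_add (hint (by fun_prop)) (hint (by fun_prop)),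
      integral_sub (hint (by fun_prop)) (hint (by fun_prop)),
      integral_sub (hint (by fun_prop)) (hint (by fun_prop)),
      integral_const_mul, integral_const_mul, integral_const_mul]
  have outer : ∫ s in a..b, w s * (f s * g s * A - f s * D - g s * C + B) =
      2 * (A * B - C * D) := by
    have expand : ∀ s, w s * (f s * g s * A - f s * D - g s * C + B) =
        f s * g s * w s * A - f s * w s * D - g s * w s * C + w s * B :=
      fun s => by ring
    simp_rw [expand]
    rw [integral_add (hint (by fun_prop)) (hint (by fun_prop)),
      integral_sub (hint (by fun_prop)) (hint (by fun_prop)),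
      integral_sub (hint (by fun_prop)) (hint (by fun_prop)),
      integral_mul_const, integral_mul_const, integral_mul_const, integral_mul_const]
    ring
  have kernel_nonneg {s t : ℝ} (hs : s ∈ Icc a b) (ht : t ∈ Icc a b) :
      0 ≤ (f s - f t) * (g s - g t) := by
    rcases le_total s t with hst | hst
    · exact mul_nonneg_of_nonpos_of_nonpos (sub_nonpos.2 (hf_mono.monotoneOn hs ht hst))
        (sub_nonpos.2 (hg_mono.monotoneOn hs ht hst))
    · exact mul_nonneg (sub_nonneg.2 (hf_mono.monotoneOn ht hs hst))
        (sub_nonneg.2 (hg_mono.monotoneOn ht hs hst))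
  have slice_pos : ∀ s ∈ Ioo a b, 0 < w s * (f s * g s * A - f s * D - g s * C + B) := by
    intro s hs
    have hs' := Ioo_subset_Icc_self hs
    rw [← slice]
    refine integral_pos hab (by fun_prop)
      (fun t ht => mul_nonneg (mul_pos (hw_pos s hs') (hw_pos t (Ioc_subset_Icc_self ht))).le
        (kernel_nonneg hs' (Ioc_subset_Icc_self ht))) ⟨a, left_mem_Icc.2 hab.le, ?_⟩
    exact mul_pos (mul_pos (hw_pos s hs') (hw_pos a (left_mem_Icc.2 hab.le)))
      (mul_pos (sub_pos.2 (hf_mono (left_mem_Icc.2 hab.le) hs' hs.1))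
        (sub_pos.2 (hg_mono (left_mem_Icc.2 hab.le) hs' hs.1)))
  have outer_pos := intervalIntegral_pos_of_pos_on (hint (by fun_prop)) slice_pos hab
  rw [outer] at outer_pos
  linarith

lemma integral_rpow_mul_integral_rpow_lt {a b p q : ℝ} (ha : 0 < a) (hab : a < b) (hpq : p < q) :
    (∫ t in a..b, t ^ p) * (∫ t in a..b, t ^ (q - 1)) <
      (∫ t in a..b, t ^ (p - 1)) * ∫ t in a..b, t ^ q := by
  have hpos : ∀ t ∈ Icc a b, 0 < t := fun t ht => ha.trans_le ht.1
  have hcont (r : ℝ) : ContinuousOn (fun t : ℝ => t ^ r) (Icc a b) :=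
    continuousOn_id.rpow_const fun t ht => Or.inl (hpos t ht).ne'
  have key := integral_mul_integral_lt_integral_mul_integral_of_strictMonoOn hab continuousOn_id
    (hcont (q - p)) (hcont (p - 1)) strictMonoOn_id
    (fun s hs t ht hst => Real.rpow_lt_rpow (hpos s hs).le hst (sub_pos.2 hpq))
    (fun t ht => Real.rpow_pos_of_pos (hpos t ht) _)
  have integral_congr_pos {φ ψ : ℝ → ℝ} (h : ∀ t, 0 < t → φ t = ψ t) :
      ∫ t in a..b, φ t = ∫ t in a..b, ψ t :=
    integral_congr fun t ht => h t (hpos t (by rwa [uIcc_of_le hab.le] at ht))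
  have hp : ∫ t in a..b, id t * t ^ (p - 1) = ∫ t in a..b, t ^ p :=
    integral_congr_pos fun t ht => by
      rw [id, mul_comm, ← Real.rpow_add_one ht.ne', sub_add_cancel]
  have hq1 : ∫ t in a..b, t ^ (q - p) * t ^ (p - 1) = ∫ t in a..b, t ^ (q - 1) :=
    integral_congr_pos fun t ht => by
      rw [← Real.rpow_add ht, sub_add_sub_cancel]
  have hq : ∫ t in a..b, id t * t ^ (q - p) * t ^ (p - 1) = ∫ t in a..b, t ^ q :=
    integral_congr_pos fun t ht => by
      rw [mul_assoc, ← Real.rpow_add ht, sub_add_sub_cancel, id, mul_comm,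
        ← Real.rpow_add_one ht.ne', sub_add_cancel]
  rwa [hp, hq1, hq] at key

lemma alzer_comm (p a b : ℝ) : alzer p a b = alzer p b a := by
  unfold alzer
  rw [← neg_sub (b ^ (p + 1)), ← neg_sub (b ^ p), neg_div_neg_eq]

lemma alzer_eq_integral_div_integral {a b p : ℝ} (ha : 0 < a) (hb : 0 < b) (hab : a ≠ b)
    (hp : p ≠ 0) (hp' : p ≠ -1) :
    alzer p b a = (∫ t in a..b, t ^ p) / ∫ t in a..b, t ^ (p - 1) := by
  have h0 : (0 : ℝ) ∉ uIcc a b := notMem_uIcc_of_lt ha hb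
  rw [integral_rpow (Or.inr ⟨hp', h0⟩),
    integral_rpow (Or.inr ⟨fun h => hp (by linarith), h0⟩), sub_add_cancel]
  have hpow : b ^ p - a ^ p ≠ 0 :=
    sub_ne_zero.2 fun h => hab ((Real.rpow_left_inj hb.le ha.le hp).1 h).symm
  have hp1 : p + 1 ≠ 0 := fun h => hp' (by linarith)
  unfold alzer
  field_simp

lemma alzer_lt_alzer_of_lt {a b p q : ℝ} (ha : 0 < a) (hab : a < b) (hp : p ≠ 0) (hp' : p ≠ -1)
    (hq : q ≠ 0) (hq' : q ≠ -1) (hpq : p < q) : alzer p b a < alzer q b a := by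
  have hb := ha.trans hab
  have hpos (r : ℝ) : 0 < ∫ t in a..b, t ^ r :=
    intervalIntegral_pos_of_pos_on (intervalIntegrable_rpow (Or.inr (notMem_uIcc_of_lt ha hb)))
      (fun t ht => Real.rpow_pos_of_pos (ha.trans ht.1) r) hab
  rw [alzer_eq_integral_div_integral ha hb hab.ne hp hp',
    alzer_eq_integral_div_integral ha hb hab.ne hq hq', div_lt_div_iff₀ (hpos _) (hpos _)]
  exact (integral_rpow_mul_integral_rpow_lt ha hab hpq).trans_eq (mul_comm _ _)

/-- For fixed distinct positive reals `x`, `y`, the map `p ↦ J_p(x,y)` is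
strictly increasing on `ℝ \ {0, -1}`. -/
theorem alzer_strictMono_in_p (x y : ℝ) (hx : 0 < x) (hy : 0 < y) (hxy : x ≠ y) :
    ∀ p q : ℝ, p ≠ 0 → p ≠ -1 → q ≠ 0 → q ≠ -1 → p < q →
      alzer p x y < alzer q x y := by
  intro p q hp hp' hq hq' hpq
  rcases hxy.lt_or_gt with h | h
  · rw [alzer_comm p, alzer_comm q]
    exact alzer_lt_alzer_of_lt hx h hp hp' hq hq' hpq
  · exact alzer_lt_alzer_of_lt hy h hp hp' hq hq' hpq
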